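/- For all b ∈ ℝ and x ∈ ℝ: ∫₀ˣ e^{−t}·erfc(b + t) dt = erfc(b) + e^{−x}·(erf(b + x) − 1) + e^{b + 1/4}·( erf(b + 1/2) − erf(b + x + 1/2) ). -/

import Mathlib

open Real

/-- The error function `erf x = (2/√π) ∫₀ˣ e^{−t²} dt`. -/
noncomputable def erf (x : ℝ) : ℝ :=
  (2 / Real.sqrt π) * ∫ t in (0 : ℝ)..x, Real.exp (-t ^ 2)

/-- The complementary error function. -/
noncomputable def erfc (x : ℝ) : ℝ := 1 - erf x

/-
Integrating by parts with `u = erfc (b + t)`, `dv = e^{-t} dt` leaves `∫ e^{-t} e^{-(b+t)²}`,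
which after completing the square, `t + (b + t)² = (b + t + 1/2)² - b - 1/4`, is again an
error function; the resulting antiderivative is checked by differentiating it.
-/

lemma hasDerivAt_erf (x : ℝ) :
    HasDerivAt erf (2 / Real.sqrt π * Real.exp (-x ^ 2)) x := by
  have hc : Continuous fun t : ℝ => Real.exp (-t ^ 2) := by fun_prop
  exact (intervalIntegral.integral_hasDerivAt_right (hc.intervalIntegrable 0 x)
    (hc.stronglyMeasurableAtFilter _ _) hc.continuousAt).const_mul _

lemma continuous_erf : Continuous erf :=
  continuous_iff_continuousAt.2 fun x => (hasDerivAt_erf x).continuousAt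

lemma hasDerivAt_erf_add (c x : ℝ) :
    HasDerivAt (fun u => erf (c + u)) (2 / Real.sqrt π * Real.exp (-(c + x) ^ 2)) x := by
  exact ((hasDerivAt_erf (c + x)).comp x ((hasDerivAt_id x).const_add c)).congr_deriv (mul_one _)

lemma exp_neg_mul_exp_neg_add_sq (b t : ℝ) :
    Real.exp (-t) * Real.exp (-(b + t) ^ 2)
      = Real.exp (b + 1 / 4) * Real.exp (-(b + 1 / 2 + t) ^ 2) := by
  rw [← Real.exp_add, ← Real.exp_add]
  ring_nf

noncomputable def expMulErfcPrimitive (b x : ℝ) : ℝ :=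
  Real.exp (-x) * (erf (b + x) - 1) - Real.exp (b + 1 / 4) * erf (b + 1 / 2 + x)

lemma hasDerivAt_expMulErfcPrimitive (b x : ℝ) :
    HasDerivAt (expMulErfcPrimitive b) (Real.exp (-x) * erfc (b + x)) x := by
  have hexp : HasDerivAt (fun u : ℝ => Real.exp (-u)) (-Real.exp (-x)) x := by
    simpa using (hasDerivAt_neg x).exp
  have h := (hexp.mul ((hasDerivAt_erf_add b x).sub_const 1)).sub
    ((hasDerivAt_erf_add (b + 1 / 2) x).const_mul (Real.exp (b + 1 / 4)))
  refine h.congr_deriv ?_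
  unfold erfc
  linear_combination (2 / Real.sqrt π) * exp_neg_mul_exp_neg_add_sq b x

lemma continuous_exp_neg_mul_erfc_add (b : ℝ) :
    Continuous fun t : ℝ => Real.exp (-t) * erfc (b + t) := by
  unfold erfc
  have := continuous_erf
  fun_prop

/-- Integral of `e^{−t} erfc(b + t)` from 0 to x (the modified Marketron potential,
up to the factor `1/(2ε̄)`). -/
theorem integral_exp_mul_erfc (b x : ℝ) :
    (∫ t in (0 : ℝ)..x, Real.exp (-t) * erfc (b + t))
      = erfc b + Real.exp (-x) * (erf (b + x) - 1) +
        Real.exp (b + 1 / 4) * (erf (b + 1 / 2) - erf (b + x + 1 / 2)) := by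
  rw [intervalIntegral.integral_eq_sub_of_hasDerivAt
    (fun t _ => hasDerivAt_expMulErfcPrimitive b t)
    ((continuous_exp_neg_mul_erfc_add b).intervalIntegrable 0 x)]
  simp only [expMulErfcPrimitive, erfc, neg_zero, Real.exp_zero, add_zero]
  ring_nf
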